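/- Let U and W be finite-dimensional vector spaces over an algebraically closed field k, and suppose ρ: U ⊗ O_{ℙⁿ} → W ⊗ O_{ℙⁿ}(1) is a morphism of sheaves on ℙⁿ that is not injective. Then for every integer m ≥ (dim(U) − 1)·n one has H^0(ker(ρ)(m)) ≠ 0. -/

import Mathlib

/-!
Pass to the fraction field and induct on the number of columns. If the matrix without its last
column still has a kernel, recurse. Otherwise choose `s` rows on which those columns form an
invertible `s × s` minor: Cramer's rule on these rows gives a polynomial kernel vector whose
entries are `s × s` minors of linear forms, hence forms of degree `s ≤ dim U - 1`, and it is a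
kernel vector of the whole matrix because the kernel is a line. Multiplying by a power of `x₀`
reaches every larger degree; for `n = 0` a homogeneous kernel vector is a power of `x₀` times a
constant one, so every degree is reached.
-/

open Matrix MvPolynomial

theorem Matrix.isHomogeneous_det {R σ n : Type*} [CommRing R] [Fintype n] [DecidableEq n]
    {A : Matrix n n (MvPolynomial σ R)} (hA : ∀ i j, (A i j).IsHomogeneous 1) :
    A.det.IsHomogeneous (Fintype.card n) := by
  rw [det_apply']
  refine IsHomogeneous.sum _ _ _ fun τ _ => ?_
  convert (IsHomogeneous.prod _ _ (fun _ => 1) fun i _ => hA (τ i) i).C_mul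
    ((Equiv.Perm.sign τ : ℤ) : R) using 1
  · rw [map_intCast]
  · simp

theorem Matrix.map_mulVec_eq_zero_iff {R S m n : Type*} [NonAssocSemiring R] [NonAssocSemiring S]
    [Fintype n] {f : R →+* S} (hf : Function.Injective f) (M : Matrix m n R) (v : n → R) :
    M.map f *ᵥ (f ∘ v) = 0 ↔ M *ᵥ v = 0 := by
  simp only [funext_iff, Pi.zero_apply, ← RingHom.map_mulVec, map_eq_zero_iff f hf]

theorem Matrix.exists_isUnit_submatrix_of_injective_mulVec {F m n : Type*} [Field F] [Fintype m]
    [Fintype n] [DecidableEq n] {A : Matrix m n F} (hA : Function.Injective A.mulVec) :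
    ∃ T : n → m, IsUnit (A.submatrix T id) := by
  have hspan : Submodule.span F (Set.range A.row) = ⊤ := by
    apply Submodule.eq_top_of_finrank_eq
    rw [← rank_eq_finrank_span_row, rank, LinearMap.finrank_range_of_inj hA]
  obtain ⟨κ, a, -, hκspan, hκli⟩ := exists_linearIndependent' F A.row
  let b := Module.Basis.mk hκli (hκspan.trans hspan).ge
  let e := (Pi.basisFun F n).indexEquiv b
  refine ⟨a ∘ e, linearIndependent_rows_iff_isUnit.mp ?_⟩
  exact hκli.comp e e.injective

theorem MvPolynomial.IsHomogeneous.eq_C_mul_X_pow {R σ : Type*} [CommSemiring R] [Unique σ]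
    {p : MvPolynomial σ R} {d : ℕ} (hp : p.IsHomogeneous d) :
    p = C (p.coeff (Finsupp.single default d)) * X default ^ d := by
  ext e
  rw [C_mul_X_pow_eq_monomial, coeff_monomial]
  split_ifs with h
  · rw [h]
  · refine hp.coeff_eq_zero fun he => h ?_
    rw [← he, Finsupp.unique_single e, Finsupp.degree_single]

section CramerKernel

variable {α m : Type*} [CommRing α] {s : ℕ}

theorem Matrix.mulVec_snoc (A : Matrix m (Fin (s + 1)) α) (x : Fin s → α) (c : α) :
    A *ᵥ Fin.snoc x c = A.submatrix id Fin.castSucc *ᵥ x + c • fun i => A i (Fin.last s) := by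
  ext i
  simp [mulVec, dotProduct, Fin.sum_univ_castSucc, mul_comm]

/-- Up to sign, the entries are the maximal minors of `N`. -/
def Matrix.cramerKernel (N : Matrix (Fin s) (Fin (s + 1)) α) : Fin (s + 1) → α :=
  Fin.snoc (cramer (N.submatrix id Fin.castSucc) fun i => N i (Fin.last s))
    (-(N.submatrix id Fin.castSucc).det)

theorem Matrix.mulVec_cramerKernel (N : Matrix (Fin s) (Fin (s + 1)) α) :
    N *ᵥ N.cramerKernel = 0 := by
  rw [cramerKernel, mulVec_snoc, mulVec_cramer, neg_smul, add_neg_cancel]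

theorem Matrix.cramerKernel_last (N : Matrix (Fin s) (Fin (s + 1)) α) :
    N.cramerKernel (Fin.last s) = -(N.submatrix id Fin.castSucc).det :=
  Fin.snoc_last ..

theorem Matrix.isHomogeneous_cramerKernel {σ R : Type*} [CommRing R]
    {N : Matrix (Fin s) (Fin (s + 1)) (MvPolynomial σ R)} (hN : ∀ i j, (N i j).IsHomogeneous 1)
    (j : Fin (s + 1)) : (N.cramerKernel j).IsHomogeneous s := by
  have hdet {P : Matrix (Fin s) (Fin s) (MvPolynomial σ R)}
      (hP : ∀ i j, (P i j).IsHomogeneous 1) : P.det.IsHomogeneous s := by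
    simpa using isHomogeneous_det hP
  induction j using Fin.lastCases with
  | last =>
    rw [cramerKernel_last]
    exact (hdet fun _ _ => hN _ _).neg
  | cast l =>
    rw [cramerKernel, Fin.snoc_castSucc, cramer_apply]
    refine hdet fun i j => ?_
    rw [updateCol_apply]
    split_ifs <;> exact hN _ _

variable [IsDomain α]

theorem Matrix.eq_zero_of_mulVec_eq_zero_of_last_eq_zero
    {N : Matrix (Fin s) (Fin (s + 1)) α} (hN : (N.submatrix id Fin.castSucc).det ≠ 0)
    {x : Fin (s + 1) → α} (hx : N *ᵥ x = 0)
    (hlast : x (Fin.last s) = 0) : x = 0 := by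
  rw [← Fin.snoc_init_self x, hlast, mulVec_snoc, zero_smul, add_zero] at hx
  have hinit : Fin.init x = 0 := by
    by_contra h
    exact hN (exists_mulVec_eq_zero_iff.mp ⟨_, h, hx⟩)
  rw [← Fin.snoc_init_self x, hinit, hlast]
  ext j
  induction j using Fin.lastCases <;> simp

/-- The minor makes the kernel of `A.submatrix T id` a line; it contains `z`, hence lies in the
kernel of `A`. -/
theorem Matrix.mulVec_eq_zero_of_submatrix_mulVec_eq_zero {A : Matrix m (Fin (s + 1)) α}
    {T : Fin s → m} (hT : (A.submatrix T Fin.castSucc).det ≠ 0) {z : Fin (s + 1) → α}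
    (hz : z ≠ 0) (hAz : A *ᵥ z = 0) {y : Fin (s + 1) → α}
    (hy : A.submatrix T id *ᵥ y = 0) :
    A *ᵥ y = 0 := by
  have hATz : A.submatrix T id *ᵥ z = 0 := funext fun i => congrFun hAz (T i)
  replace hT : ((A.submatrix T id).submatrix id Fin.castSucc).det ≠ 0 := hT
  have hz_last : z (Fin.last s) ≠ 0 := fun h =>
    hz (eq_zero_of_mulVec_eq_zero_of_last_eq_zero hT hATz h)
  have hyz : z (Fin.last s) • y = y (Fin.last s) • z := by
    rw [← sub_eq_zero]
    refine eq_zero_of_mulVec_eq_zero_of_last_eq_zero hT ?_ ?_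
    · rw [mulVec_sub, mulVec_smul, mulVec_smul, hy, hATz, smul_zero, smul_zero, sub_zero]
    · simp [mul_comm]
  have : z (Fin.last s) • (A *ᵥ y) = 0 := by
    rw [← mulVec_smul, hyz, mulVec_smul, hAz, smul_zero]
  exact (smul_eq_zero.mp this).resolve_left hz_last

end CramerKernel

section HomogeneousKernel

variable {R σ m n : Type*} [CommRing R] [IsDomain R]

theorem exists_isHomogeneous_mulVec_eq_zero_of_le [Fintype n] (i : σ)
    {M : Matrix m n (MvPolynomial σ R)} {V : n → MvPolynomial σ R} {d e : ℕ} (hV : V ≠ 0)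
    (hVd : ∀ j, (V j).IsHomogeneous d) (hMV : M *ᵥ V = 0) (hde : d ≤ e) :
    ∃ V' ≠ 0, (∀ j, (V' j).IsHomogeneous e) ∧ M *ᵥ V' = 0 := by
  refine ⟨(X i : MvPolynomial σ R) ^ (e - d) • V,
    smul_ne_zero (pow_ne_zero _ (X_ne_zero i)) hV, fun j => ?_, ?_⟩
  · simpa [Nat.sub_add_cancel hde] using (isHomogeneous_X_pow i (e - d)).mul (hVd j)
  · rw [mulVec_smul, hMV, smul_zero]

theorem exists_isHomogeneous_zero_mulVec_eq_zero [Fintype n] [Unique σ]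
    {M : Matrix m n (MvPolynomial σ R)} {V : n → MvPolynomial σ R} {d : ℕ} (hV : V ≠ 0)
    (hVd : ∀ j, (V j).IsHomogeneous d) (hMV : M *ᵥ V = 0) :
    ∃ W ≠ 0, (∀ j, (W j).IsHomogeneous 0) ∧ M *ᵥ W = 0 := by
  set W : n → MvPolynomial σ R := fun j => C ((V j).coeff (Finsupp.single default d))
  have hVW : V = (X default : MvPolynomial σ R) ^ d • W := funext fun j => by
    rw [Pi.smul_apply, smul_eq_mul, mul_comm]
    exact (hVd j).eq_C_mul_X_pow
  refine ⟨W, ?_, fun j => isHomogeneous_C _ _, ?_⟩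
  · intro hW
    exact hV (by rw [hVW, hW, smul_zero])
  · rw [hVW, mulVec_smul] at hMV
    exact (smul_eq_zero.mp hMV).resolve_left (pow_ne_zero _ (X_ne_zero _))

variable [Fintype m]

local notation "K" => FractionRing (MvPolynomial σ R)

theorem exists_isHomogeneous_mulVec_eq_zero_of_injective {s : ℕ}
    {M : Matrix m (Fin (s + 1)) (MvPolynomial σ R)} (hM : ∀ i j, (M i j).IsHomogeneous 1)
    (hker : ∃ z ≠ 0, M.map (algebraMap _ K) *ᵥ z = 0)
    (hinj : Function.Injective ((M.submatrix id Fin.castSucc).map (algebraMap _ K)).mulVec) :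
    ∃ V ≠ 0, (∀ j, (V j).IsHomogeneous s) ∧ M *ᵥ V = 0 := by
  set f := algebraMap (MvPolynomial σ R) K
  have hf : Function.Injective f := IsFractionRing.injective _ _
  obtain ⟨T, hT⟩ := exists_isUnit_submatrix_of_injective_mulVec hinj
  have hdetK : ((M.map f).submatrix T Fin.castSucc).det ≠ 0 :=
    ((isUnit_iff_isUnit_det _).mp hT).ne_zero
  have hdet : (M.submatrix T Fin.castSucc).det ≠ 0 := by
    rwa [submatrix_map, ← RingHom.mapMatrix_apply, ← RingHom.map_det, map_ne_zero_iff f hf]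
      at hdetK
  obtain ⟨z, hz, hMz⟩ := hker
  refine ⟨(M.submatrix T id).cramerKernel, fun h => hdet ?_,
    isHomogeneous_cramerKernel fun _ _ => hM _ _, ?_⟩
  · simpa [cramerKernel_last] using congrFun h (Fin.last s)
  · rw [← map_mulVec_eq_zero_iff hf]
    refine mulVec_eq_zero_of_submatrix_mulVec_eq_zero hdetK hz hMz ?_
    rw [submatrix_map, map_mulVec_eq_zero_iff hf, mulVec_cramerKernel]

theorem exists_isHomogeneous_mulVec_eq_zero {s : ℕ} (M : Matrix m (Fin s) (MvPolynomial σ R))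
    (hM : ∀ i j, (M i j).IsHomogeneous 1)
    (hker : ∃ z ≠ 0, M.map (algebraMap _ K) *ᵥ z = 0) :
    ∃ d < s, ∃ V ≠ 0, (∀ j, (V j).IsHomogeneous d) ∧ M *ᵥ V = 0 := by
  induction s with
  | zero =>
    obtain ⟨z, hz, -⟩ := hker
    exact absurd (Subsingleton.elim z 0) hz
  | succ s ih =>
    by_cases hker' : ∃ z ≠ 0, (M.submatrix id Fin.castSucc).map (algebraMap _ K) *ᵥ z = 0
    · obtain ⟨d, hds, V, hV, hVd, hMV⟩ :=
        ih (M.submatrix id Fin.castSucc) (fun _ _ => hM _ _) hker'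
      refine ⟨d, hds.trans s.lt_succ_self, Fin.snoc V 0, ?_, ?_, ?_⟩
      · exact fun h => hV (funext fun l => by simpa using congrFun h l.castSucc)
      · intro j
        induction j using Fin.lastCases with
        | last => simpa using isHomogeneous_zero _ _ d
        | cast l => simpa using hVd l
      · rw [mulVec_snoc, hMV, zero_smul, add_zero]
    · refine ⟨s, s.lt_succ_self, exists_isHomogeneous_mulVec_eq_zero_of_injective hM hker ?_⟩
      refine (injective_iff_map_eq_zero (mulVecLin _)).mpr fun z hz => ?_
      by_contra h
      exact hker' ⟨z, h, hz⟩

end HomogeneousKernel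

theorem kernel_has_sections_general {k : Type*} [Field k]
    (n u w : ℕ)
    (M : Matrix (Fin w) (Fin u) (MvPolynomial (Fin (n + 1)) k))
    (hlin : ∀ i j, (M i j).IsHomogeneous 1)
    (hnotinj : ∃ v : Fin u → MvPolynomial (Fin (n + 1)) k,
      v ≠ 0 ∧ M.mulVec v = 0)
    (m : ℕ) (hm : (u - 1) * n ≤ m) :
    ∃ v : Fin u → MvPolynomial (Fin (n + 1)) k,
      v ≠ 0 ∧ (∀ j, (v j).IsHomogeneous m) ∧ M.mulVec v = 0 := by
  obtain ⟨v, hv, hMv⟩ := hnotinj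
  have hf := IsFractionRing.injective (MvPolynomial (Fin (n + 1)) k)
    (FractionRing (MvPolynomial (Fin (n + 1)) k))
  obtain ⟨d, hdu, V, hV, hVd, hMV⟩ := exists_isHomogeneous_mulVec_eq_zero M hlin
    ⟨_ ∘ v, by simpa using hf.comp_left.ne hv, (map_mulVec_eq_zero_iff hf M v).mpr hMv⟩
  rcases n.eq_zero_or_pos with rfl | hn
  · obtain ⟨W, hW, hW0, hMW⟩ :=
      exists_isHomogeneous_zero_mulVec_eq_zero (σ := Fin 1) hV hVd hMV
    exact exists_isHomogeneous_mulVec_eq_zero_of_le 0 hW hW0 hMW m.zero_le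
  · have hdm : d ≤ m := calc
      d ≤ u - 1 := by omega
      _ ≤ (u - 1) * n := Nat.le_mul_of_pos_right _ hn
      _ ≤ m := hm
    exact exists_isHomogeneous_mulVec_eq_zero_of_le 0 hV hVd hMV hdm

/-- Lemma lemma-1: Let `U` and `W` be finite-dimensional vector
spaces over an algebraically closed field `k` (of dimensions `u` and `w`), and let
`ρ : U ⊗ O_{ℙⁿ} → W ⊗ O_{ℙⁿ}(1)` be a morphism of sheaves on `ℙⁿ` which is not
injective. Then for every integer `m ≥ (dim U − 1)·n` one has `H^0(ker(ρ)(m)) ≠ 0`.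

Following the context, this is formalized in the equivalent graded-module language:
in terms of bases of `U` and `W`, the morphism `ρ` is given by a `w × u` matrix `M`
of linear forms in `R = k[x_0, …, x_n]`; non-injectivity of `ρ` means that `M` has a
nonzero kernel vector over `R`, and `H^0(ker(ρ)(m)) ≠ 0` means that the kernel of the
corresponding map of graded free modules `U ⊗ R → W ⊗ R(1)` contains a nonzero vector
all of whose entries are homogeneous of degree `m`. -/
theorem kernel_has_sections {k : Type*} [Field k] [IsAlgClosed k]
    (n u w : ℕ)
    (M : Matrix (Fin w) (Fin u) (MvPolynomial (Fin (n + 1)) k))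
    (hlin : ∀ i j, (M i j).IsHomogeneous 1)
    (hnotinj : ∃ v : Fin u → MvPolynomial (Fin (n + 1)) k,
      v ≠ 0 ∧ M.mulVec v = 0)
    (m : ℕ) (hm : (u - 1) * n ≤ m) :
    ∃ v : Fin u → MvPolynomial (Fin (n + 1)) k,
      v ≠ 0 ∧ (∀ j, (v j).IsHomogeneous m) ∧ M.mulVec v = 0 :=
  kernel_has_sections_general n u w M hlin hnotinj m hm
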